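/- Let T be a colorable tree with χ'_irr(T) = 3. Then every vertex of maximum degree of T has a neighbor of maximum degree; i.e., the vertices of maximum degree in T come in neighboring pairs. -/
import Mathlib


open SimpleGraph

variable {V : Type*}

noncomputable def colorDeg (G : SimpleGraph V) (c : Sym2 V → ℕ) (i : ℕ) (x : V) : ℕ :=
  {y | G.Adj x y ∧ c s(x, y) = i}.ncard

def IsLocIrrColoring (G : SimpleGraph V) (c : Sym2 V → ℕ) : Prop :=
  ∀ x y, G.Adj x y → colorDeg G c (c s(x, y)) x ≠ colorDeg G c (c s(x, y)) y

def IsLIEC (G : SimpleGraph V) (k : ℕ) (c : Sym2 V → ℕ) : Prop :=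
  (∀ e ∈ G.edgeSet, c e < k) ∧ IsLocIrrColoring G c

def IrrColorable (G : SimpleGraph V) : Prop := ∃ k c, IsLIEC G k c

noncomputable def irrChromIndex (G : SimpleGraph V) : ℕ :=
  sInf {k | ∃ c, IsLIEC G k c}

def IsCactus (G : SimpleGraph V) : Prop :=
  ∀ ⦃a b : V⦄ (p : G.Walk a a) (q : G.Walk b b), p.IsCycle → q.IsCycle →
    (∃ e, e ∈ p.edges ∧ e ∈ q.edges) → ∀ e, e ∈ p.edges ↔ e ∈ q.edges

noncomputable def numCycles (G : SimpleGraph V) : ℕ :=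
  {s : Set (Sym2 V) | ∃ (w : V) (p : G.Walk w w), p.IsCycle ∧ {e | e ∈ p.edges} = s}.ncard


section Dev
open SimpleGraph Finset


open Finset

private lemma gauss (n : ℕ) : 2 * ∑ i ∈ range n, (i + 1) = n * (n + 1) := by
  induction n with
  | zero => simp
  | succ n ih =>
    rw [Finset.sum_range_succ, Nat.mul_add, ih]
    ring

private lemma quad1 (j k : ℕ) (h1 : j * (j + 1) ≤ 2 * k) (h2 : k + 1 < 2 * j) : False := by
  rcases le_or_gt j 2 with hj | hj
  · interval_cases j <;> omega
  · have : 4 * j ≤ j * (j + 1) := by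
      have : 4 ≤ j + 1 := by omega
      calc 4 * j ≤ (j + 1) * j := Nat.mul_le_mul_right _ this
      _ = j * (j + 1) := Nat.mul_comm _ _
    omega

private lemma quad2 (j k : ℕ) (h1 : j * (j + 1) + 2 ≤ 2 * k) (h2 : k = 2 * j - 1) (h3 : 1 ≤ j) :
    False := by
  rcases le_or_gt j 2 with hj | hj
  · interval_cases j <;> omega
  · have : 4 * j ≤ j * (j + 1) := by
      have : 4 ≤ j + 1 := by omega
      calc 4 * j ≤ (j + 1) * j := Nat.mul_le_mul_right _ this
      _ = j * (j + 1) := Nat.mul_comm _ _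
    omega

/-- Abstract selection lemma. -/
lemma ASL {α : Type*} [DecidableEq α] (C N : Finset α) (hNC : N ⊆ C) (val : α → ℕ) :
    ∃ x A, A ⊆ C ∧ A.card = x ∧ (∀ w ∈ N, w ∈ A → val w ≠ x) ∧
      (∀ w ∈ N, w ∉ A → val w + x + 1 ≠ C.card) := by
  classical
  set k := C.card with hk
  set a : ℕ → ℕ := fun j => (N.filter (fun w => val w = j)).card with ha
  -- sum bound
  have hsum : ∀ I : Finset ℕ, ∑ j ∈ I, a j ≤ k := by
    intro I
    have hdisj : ∀ j1 ∈ I, ∀ j2 ∈ I, j1 ≠ j2 →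
        Disjoint (N.filter (fun w => val w = j1)) (N.filter (fun w => val w = j2)) := by
      intro j1 _ j2 _ hne
      simp only [Finset.disjoint_left, mem_filter]
      rintro w ⟨_, h1⟩ ⟨_, h2⟩
      exact hne (h1 ▸ h2 ▸ rfl)
    calc ∑ j ∈ I, a j = (I.biUnion (fun j => N.filter (fun w => val w = j))).card :=
          (Finset.card_biUnion hdisj).symm
      _ ≤ C.card := Finset.card_le_card (by
          intro w hw
          simp only [mem_biUnion, mem_filter] at hw
          obtain ⟨j, _, hwN, _⟩ := hw
          exact hNC hwN)
  have hQk : a (k - k) ≤ k := by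
    have : a 0 ≤ N.card := Finset.card_filter_le _ _
    have : N.card ≤ k := Finset.card_le_card hNC
    simp only [Nat.sub_self]
    calc a 0 ≤ N.card := Finset.card_filter_le _ _
    _ ≤ k := this
  have hex : ∃ j, a (k - j) ≤ j := ⟨k, hQk⟩
  set j₀ := Nat.find hex with hj₀
  have hQ : a (k - j₀) ≤ j₀ := Nat.find_spec hex
  have hmin : ∀ i, i < j₀ → i + 1 ≤ a (k - i) := by
    intro i hi
    have := Nat.find_min hex hi
    omega
  have hj₀k : j₀ ≤ k := Nat.find_le hQk
  set x := k - j₀ with hx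
  -- sum over the image of range j₀
  have himg : ∀ J : Finset ℕ, (∀ i ∈ J, i < j₀) → (∑ i ∈ J, (i + 1)) ≤ ∑ i ∈ J, a (k - i) := by
    intro J hJ
    exact Finset.sum_le_sum (fun i hi => hmin i (hJ i hi))
  have hinj : Set.InjOn (fun i => k - i) ↑(range j₀) := by
    intro i hi j hj hij
    simp only [coe_range, Set.mem_Iio] at hi hj
    simp only at hij
    omega
  have hsum_range : ∑ i ∈ range j₀, a (k - i) ≤ k := by
    have := hsum ((range j₀).image (fun i => k - i))
    rwa [Finset.sum_image (fun i hi j hj h => hinj hi hj h)] at this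
  -- condition (ii)
  have hii : 1 ≤ j₀ → a (j₀ - 1) ≤ k - j₀ := by
    intro hj1
    by_contra hcon
    push_neg at hcon
    rcases le_or_gt (2 * j₀) (k + 1) with hcase | hcase
    · -- j₀ - 1 not of the form k - i for i < j₀
      have hnotmem : j₀ - 1 ∉ (range j₀).image (fun i => k - i) := by
        simp only [mem_image, mem_range]
        rintro ⟨i, hi, hkij⟩
        omega
      have := hsum (insert (j₀ - 1) ((range j₀).image (fun i => k - i)))
      rw [Finset.sum_insert hnotmem,
        Finset.sum_image (fun i hi j hj h => hinj hi hj h)] at this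
      have h1 : (∑ i ∈ range j₀, (i+1)) ≤ ∑ i ∈ range j₀, a (k - i) :=
        himg _ (fun i hi => mem_range.mp hi)
      have h2 : j₀ ≤ ∑ i ∈ range j₀, (i + 1) := by
        calc j₀ = ∑ _i ∈ range j₀, 1 := by simp
        _ ≤ ∑ i ∈ range j₀, (i + 1) := Finset.sum_le_sum (fun i _ => by omega)
      omega
    · have h1 : (∑ i ∈ range j₀, (i+1)) ≤ ∑ i ∈ range j₀, a (k - i) :=
        himg _ (fun i hi => mem_range.mp hi)
      have hg := gauss j₀
      exact quad1 j₀ k (by omega) hcase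
  -- condition (iii)
  have hiii : ¬(2 * x + 1 = k ∧ 1 ≤ a x) := by
    rintro ⟨hxk, hax⟩
    have hkj : k = 2 * j₀ - 1 := by omega
    have hj1 : 1 ≤ j₀ := by omega
    have hxj : x = j₀ - 1 := by omega
    have hnotmem : j₀ - 1 ∉ (range j₀).image (fun i => k - i) := by
      simp only [mem_image, mem_range]
      rintro ⟨i, hi, hkij⟩
      omega
    have := hsum (insert (j₀ - 1) ((range j₀).image (fun i => k - i)))
    rw [Finset.sum_insert hnotmem,
      Finset.sum_image (fun i hi j hj h => hinj hi hj h)] at this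
    have h1 : (∑ i ∈ range j₀, (i+1)) ≤ ∑ i ∈ range j₀, a (k - i) :=
      himg _ (fun i hi => mem_range.mp hi)
    have hg := gauss j₀
    rw [← hxj] at this
    exact quad2 j₀ k (by omega) hkj hj1
  -- construction
  set B0 := N.filter (fun w => val w + x + 1 = k) with hB0
  set pool := C \ (N.filter (fun w => val w = x)) with hpool
  have hB0pool : B0 ⊆ pool := by
    intro w hw
    simp only [hB0, mem_filter] at hw
    simp only [hpool, mem_sdiff, mem_filter]
    refine ⟨hNC hw.1, ?_⟩
    rintro ⟨hwN, hvw⟩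
    have hw2 : val w + x + 1 = k := hw.2
    refine hiii ⟨by omega, ?_⟩
    have hmem : w ∈ N.filter (fun w => val w = x) := mem_filter.mpr ⟨hwN, hvw⟩
    have hc := Finset.card_pos.mpr ⟨w, hmem⟩
    have hrfl : a x = (N.filter (fun w => val w = x)).card := rfl
    omega
  have hB0card : B0.card ≤ x := by
    rcases Nat.eq_zero_or_pos j₀ with hj0 | hj1
    · have : B0 = ∅ := by
        rw [Finset.eq_empty_iff_forall_notMem]
        intro w hw
        simp only [hB0, mem_filter] at hw
        have : x = k := by omega
        omega
      rw [this, Finset.card_empty]; omega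
    · have hBeq : B0 = N.filter (fun w => val w = j₀ - 1) := by
        apply Finset.filter_congr
        intro w _
        constructor <;> intro h <;> omega
      rw [hBeq]
      have := hii hj1
      exact this
  have hpoolcard : x ≤ pool.card := by
    have hsub : N.filter (fun w => val w = x) ⊆ C := (Finset.filter_subset _ _).trans hNC
    rw [hpool, Finset.card_sdiff_of_subset hsub]
    have h1 : a x ≤ j₀ := hQ
    have hrfl : a x = (N.filter (fun w => val w = x)).card := rfl
    omega
  obtain ⟨A, hB0A, hApool, hAcard⟩ := Finset.exists_subsuperset_card_eq hB0pool hB0card hpoolcard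
  refine ⟨x, A, hApool.trans (Finset.sdiff_subset), hAcard, ?_, ?_⟩
  · intro w hwN hwA hval
    have := hApool hwA
    simp only [hpool, mem_sdiff, mem_filter] at this
    exact this.2 ⟨hwN, hval⟩
  · intro w hwN hwA hval
    exact hwA (hB0A (mem_filter.mpr ⟨hwN, hval⟩))


variable {V : Type*}

section TreeStuff

variable [Fintype V] {T : SimpleGraph V} [DecidableRel T.Adj] {u : V}

set_option linter.unusedSectionVars false

lemma tpath_unique (hT : T.IsTree) {a b : V} (p q : T.Walk a b) (hp : p.IsPath) (hq : q.IsPath) :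
    p = q := by
  obtain ⟨r, -, hu⟩ := hT.existsUnique_path a b
  rw [hu p hp, hu q hq]

lemma tpath_length (hT : T.IsTree) {a b : V} (p : T.Walk a b) (hp : p.IsPath) :
    p.length = T.dist a b := by
  obtain ⟨q, hq, hlen⟩ := hT.isConnected.exists_path_of_dist a b
  rw [tpath_unique hT p q hp hq, hlen]

lemma exists_parent (hT : T.IsTree) {v : V} (hv : v ≠ u) :
    ∃ w, T.Adj w v ∧ T.dist u w + 1 = T.dist u v := by
  have h0 : T.dist u v ≠ 0 := fun h => hv ((hT.isConnected.dist_eq_zero_iff).mp h).symm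
  obtain ⟨p, hp, hlen⟩ := hT.isConnected.exists_path_of_dist u v
  obtain ⟨w, h, q, hq⟩ := SimpleGraph.Walk.exists_eq_cons_of_ne hv p.reverse
  have hlq : T.dist u w ≤ q.length := by
      have := SimpleGraph.dist_le q.reverse
      simpa using this
  have hlen2 : p.length = q.length + 1 := by
    have : p.reverse.length = p.length := SimpleGraph.Walk.length_reverse p
    rw [← this, hq]
    simp
  have htri : T.dist u v ≤ T.dist u w + T.dist w v :=
    hT.isConnected.dist_triangle
  have hwv : T.dist w v = 1 := SimpleGraph.dist_eq_one_iff_adj.mpr h.symm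
  exact ⟨w, h.symm, by omega⟩

lemma adj_diff (hT : T.IsTree) {x y : V} (hxy : T.Adj x y) :
    T.dist u y = T.dist u x + 1 ∨ T.dist u x = T.dist u y + 1 := by
  classical
  obtain ⟨p, hp, hlen⟩ := hT.isConnected.exists_path_of_dist u x
  by_cases hy : y ∈ p.support
  · right
    have hq : (p.takeUntil y hy).IsPath := hp.takeUntil hy
    have hr : (p.dropUntil y hy).IsPath := hp.dropUntil hy
    have hsplit := SimpleGraph.Walk.take_spec p hy
    have hlens : (p.takeUntil y hy).length + (p.dropUntil y hy).length = p.length := by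
      rw [← SimpleGraph.Walk.length_append, hsplit]
    have h1 : (p.takeUntil y hy).length = T.dist u y := tpath_length hT _ hq
    have h2 : (p.dropUntil y hy).length = 1 := by
      have := tpath_unique hT (p.dropUntil y hy) (SimpleGraph.Path.singleton hxy.symm).1 hr
        (SimpleGraph.Path.singleton hxy.symm).2
      rw [this]
      rfl
    omega
  · left
    have hp' : (p.concat hxy).IsPath := by
      rw [← SimpleGraph.Walk.isPath_reverse_iff, SimpleGraph.Walk.reverse_concat]
      rw [SimpleGraph.Walk.cons_isPath_iff]
      refine ⟨hp.reverse, ?_⟩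
      rw [SimpleGraph.Walk.support_reverse, List.mem_reverse]
      exact hy
    have := tpath_length hT _ hp'
    rw [SimpleGraph.Walk.length_concat] at this
    omega

lemma parent_unique (hT : T.IsTree) {v w1 w2 : V} (h1 : T.Adj w1 v)
    (hd1 : T.dist u w1 + 1 = T.dist u v) (h2 : T.Adj w2 v)
    (hd2 : T.dist u w2 + 1 = T.dist u v) : w1 = w2 := by
  have build : ∀ (w : V) (h : T.Adj w v), T.dist u w + 1 = T.dist u v →
      ∃ p : T.Walk u v, p.IsPath ∧ p.reverse.getVert 1 = w := by
    classical
    intro w h hd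
    obtain ⟨pw, hpw, hlw⟩ := hT.isConnected.exists_path_of_dist u w
    have hvs : v ∉ pw.support := by
      intro hvmem
      have hq : (pw.takeUntil v hvmem).IsPath := hpw.takeUntil hvmem
      have h1 : (pw.takeUntil v hvmem).length = T.dist u v := tpath_length hT _ hq
      have h2 := SimpleGraph.Walk.length_takeUntil_le pw hvmem
      omega
    refine ⟨pw.concat h, ?_, ?_⟩
    · rw [← SimpleGraph.Walk.isPath_reverse_iff, SimpleGraph.Walk.reverse_concat,
        SimpleGraph.Walk.cons_isPath_iff]
      refine ⟨hpw.reverse, ?_⟩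
      rw [SimpleGraph.Walk.support_reverse, List.mem_reverse]
      exact hvs
    · rw [SimpleGraph.Walk.reverse_concat]
      rw [SimpleGraph.Walk.getVert_cons_succ]
      exact SimpleGraph.Walk.getVert_zero _
  obtain ⟨p1, hp1, hg1⟩ := build w1 h1 hd1
  obtain ⟨p2, hp2, hg2⟩ := build w2 h2 hd2
  rw [tpath_unique hT p1 p2 hp1 hp2] at hg1
  rw [← hg1, ← hg2]

open Classical in
noncomputable def par (T : SimpleGraph V) (u v : V) : V :=
  if h : ∃ w, T.Adj w v ∧ T.dist u w + 1 = T.dist u v then h.choose else u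

lemma par_spec (hT : T.IsTree) {v : V} (hv : v ≠ u) :
    T.Adj (par T u v) v ∧ T.dist u (par T u v) + 1 = T.dist u v := by
  have hex := exists_parent (u := u) hT hv
  rw [par, dif_pos hex]
  exact hex.choose_spec

lemma par_eq (hT : T.IsTree) {v w : V} (hadj : T.Adj w v)
    (hd : T.dist u w + 1 = T.dist u v) : par T u v = w := by
  have hv : v ≠ u := by
    rintro rfl
    rw [SimpleGraph.dist_self] at hd
    omega
  exact parent_unique hT (par_spec hT hv).1 (par_spec hT hv).2 hadj hd

open Classical in
noncomputable def children (T : SimpleGraph V) [Fintype V] (u x : V) : Finset V :=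
  Finset.univ.filter (fun y => y ≠ u ∧ par T u y = x)

lemma mem_children {x y : V} : y ∈ children T u x ↔ y ≠ u ∧ par T u y = x := by
  classical
  simp [children]

lemma depth_pos (hT : T.IsTree) {v : V} (hv : v ≠ u) : 1 ≤ T.dist u v := by
  refine Nat.pos_of_ne_zero fun h => hv ?_
  exact ((hT.isConnected.dist_eq_zero_iff).mp h).symm

lemma depth_zero (hT : T.IsTree) {v : V} (h : T.dist u v = 0) : v = u :=
  ((hT.isConnected.dist_eq_zero_iff).mp h).symm

lemma child_depth (hT : T.IsTree) {x y : V} (hy : y ∈ children T u x) :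
    T.Adj x y ∧ T.dist u y = T.dist u x + 1 := by
  obtain ⟨hyu, hp⟩ := mem_children.mp hy
  have := par_spec hT hyu
  rw [hp] at this
  exact ⟨this.1, this.2.symm⟩

lemma adj_cases (hT : T.IsTree) {x y : V} (hxy : T.Adj x y) :
    y ∈ children T u x ∨ x ∈ children T u y := by
  rcases adj_diff (u := u) hT hxy with hd | hd
  · left
    have hyu : y ≠ u := by
      rintro rfl
      rw [SimpleGraph.dist_self] at hd
      omega
    exact mem_children.mpr ⟨hyu, par_eq hT hxy hd.symm⟩
  · right
    have hxu : x ≠ u := by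
      rintro rfl
      rw [SimpleGraph.dist_self] at hd
      omega
    exact mem_children.mpr ⟨hxu, par_eq hT hxy.symm hd.symm⟩

lemma par_not_child (hT : T.IsTree) {x : V} (hx : x ≠ u) : par T u x ∉ children T u x := by
  intro hmem
  have h1 := (child_depth hT hmem).2
  have h2 := (par_spec hT hx).2
  omega

lemma neighborFinset_eq_children (hT : T.IsTree) :
    T.neighborFinset u = children T u u := by
  ext y
  rw [SimpleGraph.mem_neighborFinset]
  constructor
  · intro h
    rcases adj_cases hT h with h' | h'
    · exact h'
    · exact absurd (mem_children.mp h').1 (by simp)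
  · intro h
    exact (child_depth hT h).1

open Classical in
lemma neighborFinset_eq (hT : T.IsTree) {x : V} (hx : x ≠ u) :
    T.neighborFinset x = insert (par T u x) (children T u x) := by
  classical
  ext y
  rw [SimpleGraph.mem_neighborFinset, Finset.mem_insert]
  constructor
  · intro h
    rcases adj_cases hT h with h' | h'
    · exact Or.inr h'
    · exact Or.inl (mem_children.mp h').2.symm
  · rintro (rfl | h)
    · exact ((par_spec hT hx).1).symm
    · exact (child_depth hT h).1

lemma degree_u (hT : T.IsTree) : T.degree u = (children T u u).card := by
  rw [← SimpleGraph.card_neighborFinset_eq_degree, neighborFinset_eq_children hT]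

open Classical in
lemma degree_ne_u (hT : T.IsTree) {x : V} (hx : x ≠ u) :
    T.degree x = (children T u x).card + 1 := by
  classical
  rw [← SimpleGraph.card_neighborFinset_eq_degree, neighborFinset_eq hT hx,
    Finset.card_insert_of_notMem (par_not_child hT hx)]

/-- `w` is a descendant of `v` (in the tree rooted at `u`). -/
def desc (T : SimpleGraph V) (u v w : V) : Prop :=
  T.dist u v ≤ T.dist u w ∧ (par T u)^[T.dist u w - T.dist u v] w = v

lemma iter_depth (hT : T.IsTree) : ∀ (n : ℕ) (w : V), n ≤ T.dist u w →
    T.dist u ((par T u)^[n] w) = T.dist u w - n := by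
  intro n
  induction n with
  | zero => simp
  | succ n ih =>
    intro w hn
    have hw : w ≠ u := by
      intro h
      rw [h, SimpleGraph.dist_self] at hn
      omega
    rw [Function.iterate_succ_apply]
    have hp := (par_spec hT hw).2
    have := ih (par T u w) (by omega)
    rw [this]
    omega

lemma desc_refl (v : V) : desc T u v v := by
  simp [desc]

lemma desc_child (hT : T.IsTree) {x y : V} (hy : y ∈ children T u x) : desc T u x y := by
  have hd := (child_depth hT hy).2
  constructor
  · omega
  · have : T.dist u y - T.dist u x = 1 := by omega
    rw [this, Function.iterate_one]
    exact (mem_children.mp hy).2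

lemma desc_depth_lt (hT : T.IsTree) {v w : V} (hd : desc T u v w) (hne : w ≠ v) :
    T.dist u v < T.dist u w := by
  rcases Nat.lt_or_ge (T.dist u v) (T.dist u w) with h | h
  · exact h
  · exfalso
    have h0 : T.dist u w - T.dist u v = 0 := by omega
    have h2 := hd.2
    rw [h0, Function.iterate_zero_apply] at h2
    exact hne h2

lemma desc_step (hT : T.IsTree) {v w : V} (hd : desc T u v w) (hne : w ≠ v) :
    ∃ c ∈ children T u v, desc T u c w := by
  have hlt : T.dist u v < T.dist u w := desc_depth_lt hT hd hne
  set n := T.dist u w - T.dist u v with hn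
  have hn1 : 1 ≤ n := by omega
  set c := (par T u)^[n - 1] w with hc
  have hcd : T.dist u c = T.dist u v + 1 := by
    rw [hc, iter_depth hT (n-1) w (by omega)]
    omega
  have hcu : c ≠ u := by
    intro h
    rw [h, SimpleGraph.dist_self] at hcd
    omega
  have hpc : par T u c = v := by
    have h1 : (par T u)^[n] w = v := hd.2
    rw [← h1, hc, ← Function.iterate_succ_apply' (par T u) (n-1) w]
    congr 1
    omega
  refine ⟨c, mem_children.mpr ⟨hcu, hpc⟩, ?_, ?_⟩
  · omega
  · have : T.dist u w - T.dist u c = n - 1 := by omega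
    rw [this]

lemma desc_unique_child (hT : T.IsTree) {v c c' w : V} (hc : c ∈ children T u v)
    (hc' : c' ∈ children T u v) (h : desc T u c w) (h' : desc T u c' w) : c = c' := by
  have h1 := (child_depth hT hc).2
  have h2 := (child_depth hT hc').2
  have e1 := h.2
  have e2 := h'.2
  rw [← e1, ← e2]
  congr 1
  omega

lemma desc_u (hT : T.IsTree) (w : V) : desc T u u w := by
  constructor
  · simp [SimpleGraph.dist_self]
  · apply depth_zero hT
    rw [iter_depth hT _ w (by simp [SimpleGraph.dist_self])]
    simp [SimpleGraph.dist_self]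

lemma desc_child_extend (hT : T.IsTree) {c w y : V} (hd : desc T u c w)
    (hy : y ∈ children T u w) : desc T u c y := by
  have hdy := (child_depth hT hy).2
  have hdc := hd.1
  constructor
  · omega
  · have : T.dist u y - T.dist u c = (T.dist u w - T.dist u c) + 1 := by omega
    rw [this, Function.iterate_succ_apply, (mem_children.mp hy).2, hd.2]

lemma desc_parent_step (hT : T.IsTree) {c w : V} (hd : desc T u c w) (hne : w ≠ c) :
    desc T u c (par T u w) := by
  have hlt := desc_depth_lt hT hd hne
  have hwu : w ≠ u := by
    intro h
    rw [h, SimpleGraph.dist_self] at hlt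
    omega
  have hdp := (par_spec hT hwu).2
  have key : ∀ m, m + 1 = T.dist u w - T.dist u c → (par T u)^[m] (par T u w) = c := by
    intro m hm
    rw [← Function.iterate_succ_apply, Nat.succ_eq_add_one, hm, hd.2]
  constructor
  · omega
  · exact key _ (by omega)

lemma dist_lt_card (hT : T.IsTree) (v : V) : T.dist u v < Fintype.card V := by
  obtain ⟨p, hp, hlen⟩ := hT.isConnected.exists_path_of_dist u v
  rw [← hlen]
  exact hp.length_lt

open Classical in
noncomputable def cnt (T : SimpleGraph V) [Fintype V] (u : V) (col : V → ℕ) (x : V) (i : ℕ) :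
    ℕ :=
  ((children T u x).filter (fun y => col y = i)).card

open Classical in
noncomputable def deg1 (T : SimpleGraph V) [Fintype V] (u : V) (col : V → ℕ) (γ : ℕ) (v x : V)
    (i : ℕ) : ℕ :=
  cnt T u col x i + (if x = v then (if γ = i then 1 else 0) else (if col x = i then 1 else 0))

def GoodC (T : SimpleGraph V) [Fintype V] (u : V) (col : V → ℕ) (γ : ℕ) (v : V) : Prop :=
  ∀ w, desc T u v w → w ≠ v →
    deg1 T u col γ v (par T u w) (col w) ≠ deg1 T u col γ v w (col w)

def RealC (T : SimpleGraph V) [Fintype V] (u : V) (γ : ℕ) (v : V) (m : ℕ) : Prop :=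
  ∃ col : V → ℕ, (∀ w, col w ≤ 1) ∧ GoodC T u col γ v ∧ m = cnt T u col v γ

lemma cnt_congr {col col' : V → ℕ} {x : V} {i : ℕ}
    (h : ∀ y ∈ children T u x, col y = col' y) : cnt T u col x i = cnt T u col' x i := by
  classical
  unfold cnt
  congr 1
  apply Finset.filter_congr
  intro y hy
  rw [h y hy]

lemma real_swap {γ : ℕ} (hγ : γ ≤ 1) {v : V} {m : ℕ} (h : RealC T u γ v m) :
    RealC T u (1 - γ) v m := by
  classical
  obtain ⟨col, hb, hg, hm⟩ := h
  set col' : V → ℕ := fun w => 1 - col w with hcol'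
  have hpt : ∀ w, col' w = 1 - col w := fun w => rfl
  have hb' : ∀ w, col' w ≤ 1 := by intro w; rw [hpt w]; omega
  have hcnt : ∀ (x : V) (i : ℕ), i ≤ 1 → cnt T u col' x i = cnt T u col x (1 - i) := by
    intro x i hi
    unfold cnt
    congr 1
    apply Finset.filter_congr
    intro y _
    have h1 := hb y
    have h2 := hpt y
    constructor <;> intro h' <;> omega
  refine ⟨col', hb', ?_, ?_⟩
  · intro w hdesc hne
    have key : ∀ (x : V) (i : ℕ), i ≤ 1 →
        deg1 T u col' (1 - γ) v x i = deg1 T u col γ v x (1 - i) := by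
      intro x i hi
      unfold deg1
      rw [hcnt x i hi]
      congr 1
      by_cases hx : x = v
      · rw [if_pos hx, if_pos hx]
        split_ifs <;> omega
      · rw [if_neg hx, if_neg hx]
        have h1 := hb x
        have h2 := hpt x
        split_ifs <;> omega
    have h1 := hg w hdesc hne
    have e1 := key (par T u w) (col' w) (hb' w)
    have e2 := key w (col' w) (hb' w)
    have hcw : 1 - col' w = col w := by have := hb w; rw [hpt w]; omega
    rw [hcw] at e1 e2
    rw [e1, e2]
    exact h1
  · rw [hcnt v (1 - γ) (by omega)]
    have h10 : 1 - (1 - γ) = γ := by omega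
    rw [h10, ← hm]

lemma real_zero_one {v : V} {m : ℕ} : RealC T u 0 v m ↔ RealC T u 1 v m := by
  constructor
  · intro h
    simpa using real_swap (by norm_num) h
  · intro h
    simpa using real_swap (le_refl 1) h

lemma main_real (hT : T.IsTree) : ∀ v : V, ∃ m, RealC T u 0 v m := by
  classical
  suffices H : ∀ (n : ℕ) (v : V), Fintype.card V - T.dist u v ≤ n → ∃ m, RealC T u 0 v m by
    intro v
    exact H (Fintype.card V) v (by omega)
  intro n
  induction n with
  | zero =>
    intro v hv
    exfalso
    have := dist_lt_card (u := u) hT v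
    omega
  | succ n ih =>
    intro v hv
    have hvlt := dist_lt_card (u := u) hT v
    set C := children T u v with hC
    set k := C.card with hk
    set Flex : V → Prop := fun c => ∃ m m', m ≠ m' ∧ RealC T u 0 c m ∧ RealC T u 0 c m'
      with hFlex
    set N := C.filter (fun c => ¬ Flex c) with hN
    set val : V → ℕ := fun c => if h : ∃ m, RealC T u 0 c m then h.choose else 0 with hval
    obtain ⟨x, A, hAC, hAcard, hA, hB⟩ := ASL C N (Finset.filter_subset _ _) val
    have hxk : x ≤ k := hAcard ▸ Finset.card_le_card hAC
    have hdepth : ∀ c ∈ C, T.dist u c = T.dist u v + 1 := by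
      intro c hc
      exact (child_depth hT hc).2
    have hcv : ∀ c ∈ C, c ≠ v := by
      intro c hc h
      have := hdepth c hc
      rw [h] at this
      omega
    -- per-child choices
    have hch : ∀ c ∈ C, ∃ mc colc, (∀ w, colc w ≤ 1) ∧
        GoodC T u colc (if c ∈ A then 0 else 1) c ∧
        mc = cnt T u colc c (if c ∈ A then 0 else 1) ∧
        (if c ∈ A then mc ≠ x else mc + x + 1 ≠ k) := by
      intro c hc
      have hmex : ∃ m, RealC T u 0 c m := by
        apply ih c
        have := hdepth c hc
        omega
      have hreal : ∃ mc, RealC T u 0 c mc ∧ (if c ∈ A then mc ≠ x else mc + x + 1 ≠ k) := by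
        by_cases hf : Flex c
        · obtain ⟨m, m', hne, h1, h2⟩ := hf
          by_cases hcA : c ∈ A
          · simp only [hcA, if_true]
            rcases eq_or_ne m x with rfl | hmx
            · exact ⟨m', h2, by omega⟩
            · exact ⟨m, h1, hmx⟩
          · simp only [hcA, if_false]
            rcases eq_or_ne (m + x + 1) k with he | hmx
            · exact ⟨m', h2, by omega⟩
            · exact ⟨m, h1, hmx⟩
        · have hcN : c ∈ N := Finset.mem_filter.mpr ⟨hc, hf⟩
          have hvc : RealC T u 0 c (val c) := by
            simp only [hval, dif_pos hmex]
            exact hmex.choose_spec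
          refine ⟨val c, hvc, ?_⟩
          by_cases hcA : c ∈ A
          · simp only [hcA, if_true]
            exact hA c hcN hcA
          · simp only [hcA, if_false]
            exact hB c hcN hcA
      obtain ⟨mc, hmc, hcond⟩ := hreal
      by_cases hcA : c ∈ A
      · obtain ⟨colc, hb, hg, hcnt⟩ := hmc
        exact ⟨mc, colc, hb, by simpa [hcA] using hg, by simpa [hcA] using hcnt,
          by simpa [hcA] using hcond⟩
      · obtain ⟨colc, hb, hg, hcnt⟩ := real_zero_one.mp hmc
        exact ⟨mc, colc, hb, by simpa [hcA] using hg, by simpa [hcA] using hcnt,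
          by simpa [hcA] using hcond⟩
    choose! mc colc hbound hgood hcnt havoid using hch
    -- glue the colorings
    set anc : V → V := fun w => (par T u)^[T.dist u w - (T.dist u v + 1)] w with hanc
    set colg : V → ℕ := fun w =>
      if w ∈ C then (if w ∈ A then 0 else 1)
      else if h : anc w ∈ C then colc (anc w) w else 0 with hcolg
    have hgb : ∀ w, colg w ≤ 1 := by
      intro w
      simp only [hcolg]
      split_ifs with h1 h2 h3
      · omega
      · omega
      · exact hbound _ h3 w
      · omega
    -- identification of glued coloring on subtrees
    have hF1 : ∀ c ∈ C, ∀ w, desc T u c w → w ≠ c → (w ∉ C ∧ anc w = c) := by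
      intro c hc w hdw hne
      have hdc := hdepth c hc
      have hlt := desc_depth_lt hT hdw hne
      constructor
      · intro hwC
        have := hdepth w hwC
        omega
      · have : T.dist u w - (T.dist u v + 1) = T.dist u w - T.dist u c := by omega
        simp only [hanc, this]
        exact hdw.2
    have hF3 : ∀ c ∈ C, ∀ w, desc T u c w → w ≠ c → colg w = colc c w := by
      intro c hc w hdw hne
      obtain ⟨hwC, hancw⟩ := hF1 c hc w hdw hne
      simp only [hcolg, if_neg hwC, hancw, dif_pos hc]
    have hF2 : ∀ c ∈ C, colg c = (if c ∈ A then 0 else 1) := by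
      intro c hc
      simp only [hcolg, if_pos hc]
    -- cnt of glue at v
    have hF6 : cnt T u colg v 0 = x := by
      have : (children T u v).filter (fun y => colg y = 0) = A := by
        ext y
        simp only [Finset.mem_filter]
        constructor
        · rintro ⟨hyC, hy0⟩
          rw [hF2 y hyC] at hy0
          by_contra hyA
          simp [hyA] at hy0
        · intro hyA
          have hyC := hAC hyA
          exact ⟨hyC, by rw [hF2 y hyC]; simp [hyA]⟩
      unfold cnt
      rw [this, hAcard]
    have hF7 : cnt T u colg v 1 = k - x := by
      have : (children T u v).filter (fun y => colg y = 1) = C \ A := by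
        ext y
        simp only [Finset.mem_filter, Finset.mem_sdiff]
        constructor
        · rintro ⟨hyC, hy1⟩
          rw [hF2 y hyC] at hy1
          refine ⟨hyC, ?_⟩
          intro hyA
          simp [hyA] at hy1
        · rintro ⟨hyC, hyA⟩
          exact ⟨hyC, by rw [hF2 y hyC]; simp [hyA]⟩
      unfold cnt
      rw [this, Finset.card_sdiff_of_subset hAC, hAcard]
    -- cnt transfer
    have hF4 : ∀ c ∈ C, ∀ i, cnt T u colg c i = cnt T u (colc c) c i := by
      intro c hc i
      apply cnt_congr
      intro y hy
      exact hF3 c hc y (desc_child hT hy) (by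
        intro h
        have := (child_depth hT hy).2
        rw [h] at this
        omega)
    have hF5 : ∀ c ∈ C, ∀ w, desc T u c w → w ≠ c → ∀ i,
        cnt T u colg w i = cnt T u (colc c) w i := by
      intro c hc w hdw hne i
      apply cnt_congr
      intro y hy
      refine hF3 c hc y (desc_child_extend hT hdw hy) ?_
      intro h
      have h1 := (child_depth hT hy).2
      have h2 := desc_depth_lt hT hdw hne
      rw [h] at h1
      omega
    -- Good for glue
    have hGood : GoodC T u colg 0 v := by
      intro w hdesc hne
      obtain ⟨c, hcC, hdc⟩ := desc_step hT hdesc hne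
      have hparc : par T u c = v := (mem_children.mp hcC).2
      have hdC := hdepth c hcC
      by_cases hwc : w = c
      · subst hwc
        rw [hparc]
        have hcolw := hF2 w hcC
        unfold deg1
        rw [if_pos rfl, if_neg (hcv w hcC)]
        by_cases hwA : w ∈ A
        · simp only [hwA, if_true] at hcolw
          have h1 := hcnt w hcC
          have h2 := havoid w hcC
          simp only [hwA, if_true] at h1 h2
          rw [hcolw, hF6, hF4 w hcC 0, ← h1, if_pos rfl]
          omega
        · simp only [hwA, if_false] at hcolw
          have h1 := hcnt w hcC
          have h2 := havoid w hcC
          simp only [hwA, if_false] at h1 h2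
          rw [hcolw, hF7, hF4 w hcC 1, ← h1, if_neg (by omega : ¬(0:ℕ) = 1), if_pos rfl]
          omega
      · -- deeper edge: transfer to subtree coloring of c
        have hcolw := hF3 c hcC w hdc hwc
        have hwv : w ≠ v := hne
        have htransc : ∀ i, deg1 T u colg 0 v c i =
            deg1 T u (colc c) (if c ∈ A then 0 else 1) c c i := by
          intro i
          unfold deg1
          rw [hF4 c hcC i, if_neg (hcv c hcC), if_pos rfl, hF2 c hcC]
        have htrans : ∀ z, desc T u c z → z ≠ c → z ≠ v → ∀ i,
            deg1 T u colg 0 v z i = deg1 T u (colc c) (if c ∈ A then 0 else 1) c z i := by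
          intro z hdz hzc hzv i
          unfold deg1
          rw [hF5 c hcC z hdz hzc i, if_neg hzv, if_neg hzc, hF3 c hcC z hdz hzc]
        have hkey := hgood c hcC w hdc hwc
        rw [hcolw]
        have hpw : desc T u c (par T u w) := desc_parent_step hT hdc hwc
        by_cases hpwc : par T u w = c
        · rw [hpwc] at hkey ⊢
          rw [htransc, htrans w hdc hwc hwv]
          exact hkey
        · have hpwv : par T u w ≠ v := by
            intro hcontra
            have hlt2 := desc_depth_lt hT hpw hpwc
            rw [hcontra] at hlt2
            omega
          rw [htrans (par T u w) hpw hpwc hpwv, htrans w hdc hwc hwv]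
          exact hkey
    exact ⟨x, colg, hgb, hGood, hF6.symm⟩

lemma colorDeg_eq_filter (hT : T.IsTree) (c : Sym2 V → ℕ) (i : ℕ) (x : V) :
    colorDeg T c i x = ((T.neighborFinset x).filter (fun y => c s(x,y) = i)).card := by
  classical
  rw [colorDeg]
  have : {y | T.Adj x y ∧ c s(x, y) = i} =
      ↑((T.neighborFinset x).filter (fun y => c s(x,y) = i)) := by
    ext y
    simp [SimpleGraph.mem_neighborFinset]
  rw [this, Set.ncard_coe_finset]

end TreeStuff

end Dev

theorem max_degree_vertices_come_in_pairs
    [Fintype V] (T : SimpleGraph V) [DecidableRel T.Adj]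
    (hT : T.IsTree) (hcol : IrrColorable T) (h3 : irrChromIndex T = 3)
    (u : V) (hmax : ∀ w, T.degree w ≤ T.degree u) :
    ∃ v, T.Adj u v ∧ T.degree v = T.degree u := by
  classical
  by_contra hno
  push_neg at hno
  have hless : ∀ v, T.Adj u v → T.degree v < T.degree u := by
    intro v hv
    exact lt_of_le_of_ne (hmax v) (hno v hv)
  set CU := children T u u with hCU
  have hch : ∀ c ∈ CU, ∃ m col, (∀ w, (col : V → ℕ) w ≤ 1) ∧ GoodC T u col 0 c ∧
      m = cnt T u col c 0 := by
    intro c hc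
    obtain ⟨m, hm⟩ := main_real (u := u) hT c
    obtain ⟨col, hb, hg, hcnt⟩ := hm
    exact ⟨m, col, hb, hg, hcnt⟩
  choose! mc colc hbound hgood hcnt using hch
  set anc : V → V := fun w => (par T u)^[T.dist u w - 1] w with hanc
  set colF : V → ℕ := fun w =>
    if w ∈ CU then 0 else if h : anc w ∈ CU then colc (anc w) w else 0 with hcolF
  have hFb : ∀ w, colF w ≤ 1 := by
    intro w
    simp only [hcolF]
    split_ifs with h1 h2
    · omega
    · exact hbound _ h2 w
    · omega
  have hdu : T.dist u u = 0 := SimpleGraph.dist_self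
  have hdepth : ∀ c ∈ CU, T.dist u c = 1 := by
    intro c hc
    have := (child_depth hT hc).2
    omega
  have hF1 : ∀ c ∈ CU, ∀ w, desc T u c w → w ≠ c → (w ∉ CU ∧ anc w = c) := by
    intro c hc w hdw hne
    have hdc := hdepth c hc
    have hlt := desc_depth_lt hT hdw hne
    constructor
    · intro hwC
      have := hdepth w hwC
      omega
    · have heq : T.dist u w - 1 = T.dist u w - T.dist u c := by omega
      simp only [hanc, heq]
      exact hdw.2
  have hF3 : ∀ c ∈ CU, ∀ w, desc T u c w → w ≠ c → colF w = colc c w := by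
    intro c hc w hdw hne
    obtain ⟨hwC, hancw⟩ := hF1 c hc w hdw hne
    simp only [hcolF, if_neg hwC, hancw, dif_pos hc]
  have hF2 : ∀ c ∈ CU, colF c = 0 := by
    intro c hc
    simp only [hcolF, if_pos hc]
  set cc : Sym2 V → ℕ := Sym2.lift ⟨fun p q =>
      if T.dist u p < T.dist u q then colF q
      else if T.dist u q < T.dist u p then colF p else 0,
    fun p q => by dsimp only; split_ifs <;> omega⟩ with hcc
  have hccval : ∀ p q : V, cc s(p, q) =
      if T.dist u p < T.dist u q then colF q
      else if T.dist u q < T.dist u p then colF p else 0 := by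
    intro p q
    simp only [hcc, Sym2.lift_mk]
  have hcc_child : ∀ x y : V, y ∈ children T u x → cc s(x, y) = colF y := by
    intro x y hy
    have hd := (child_depth hT hy).2
    rw [hccval, if_pos (by omega)]
  have hcd_u : ∀ i, colorDeg T cc i u = cnt T u colF u i := by
    intro i
    rw [colorDeg_eq_filter hT, neighborFinset_eq_children hT]
    unfold cnt
    congr 1
    apply Finset.filter_congr
    intro y hy
    rw [hcc_child u y hy]
  have hcd : ∀ x, x ≠ u → ∀ i, colorDeg T cc i x =
      cnt T u colF x i + (if colF x = i then 1 else 0) := by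
    intro x hx i
    rw [colorDeg_eq_filter hT, neighborFinset_eq hT hx, Finset.filter_insert]
    have hpx : cc s(x, par T u x) = colF x := by
      rw [Sym2.eq_swap]
      exact hcc_child (par T u x) x (mem_children.mpr ⟨hx, rfl⟩)
    have hfeq : ((children T u x).filter (fun y => cc s(x,y) = i)).card =
        cnt T u colF x i := by
      unfold cnt
      congr 1
      apply Finset.filter_congr
      intro y hy
      rw [hcc_child x y hy]
    by_cases hi : colF x = i
    · rw [if_pos (by rw [hpx]; exact hi), Finset.card_insert_of_notMem, hfeq, if_pos hi]
      intro hmem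
      exact par_not_child hT hx (Finset.mem_of_mem_filter _ hmem)
    · rw [if_neg (by rw [hpx]; exact hi), hfeq, if_neg hi]
      omega
  have hconf : ∀ x y : V, y ∈ children T u x →
      colorDeg T cc (cc s(x,y)) x ≠ colorDeg T cc (cc s(x,y)) y := by
    intro x y hy
    rw [hcc_child x y hy]
    have hyu : y ≠ u := (mem_children.mp hy).1
    by_cases hx : x = u
    · rw [hx] at hy ⊢
      have hy0 : colF y = 0 := hF2 y hy
      rw [hy0, hcd_u 0, hcd y hyu 0]
      have hall : cnt T u colF u 0 = CU.card := by
        unfold cnt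
        rw [Finset.filter_true_of_mem]
        intro z hz
        exact hF2 z hz
      have htr : cnt T u colF y 0 = cnt T u (colc y) y 0 := by
        apply cnt_congr
        intro z hz
        refine hF3 y hy z (desc_child hT hz) ?_
        intro h
        have h1 := (child_depth hT hz).2
        rw [h] at h1
        have := hdepth y hy
        omega
      rw [hall, htr, if_pos hy0]
      have hdeg_u : T.degree u = CU.card := degree_u hT
      have hdeg_y : T.degree y = (children T u y).card + 1 := degree_ne_u hT hyu
      have hmy : mc y = cnt T u (colc y) y 0 := hcnt y hy
      have hmyle : cnt T u (colc y) y 0 ≤ (children T u y).card := by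
        unfold cnt
        exact Finset.card_filter_le _ _
      have hlty := hless y (child_depth hT hy).1
      omega
    · obtain ⟨c, hcC, hdcx⟩ := desc_step hT (desc_u hT x) hx
      have hdcy : desc T u c y := desc_child_extend hT hdcx hy
      have hyc : y ≠ c := by
        intro h
        have h1 := (child_depth hT hy).2
        have h2 := hdcx.1
        rw [h] at h1
        omega
      have hkey := hgood c hcC y hdcy hyc
      have hpy : par T u y = x := (mem_children.mp hy).2
      rw [hpy] at hkey
      have hcolFy : colF y = colc c y := hF3 c hcC y hdcy hyc
      have htrans : ∀ z, desc T u c z → z ≠ u → ∀ i,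
          colorDeg T cc i z = deg1 T u (colc c) 0 c z i := by
        intro z hdz hzu i
        rw [hcd z hzu i]
        unfold deg1
        by_cases hzc : z = c
        · have hcnteq : cnt T u colF c i = cnt T u (colc c) c i := by
            apply cnt_congr
            intro a ha
            refine hF3 c hcC a (desc_child hT ha) ?_
            intro h
            have h1 := (child_depth hT ha).2
            rw [h] at h1
            have := hdepth c hcC
            omega
          rw [hzc, if_pos rfl, hcnteq, hF2 c hcC]
        · have h1 : cnt T u colF z i = cnt T u (colc c) z i := by
            apply cnt_congr
            intro a ha
            refine hF3 c hcC a (desc_child_extend hT hdz ha) ?_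
            intro h
            have h2 := (child_depth hT ha).2
            have h3 := desc_depth_lt hT hdz hzc
            rw [h] at h2
            omega
          rw [h1, if_neg hzc, hF3 c hcC z hdz hzc]
      rw [hcolFy, htrans x hdcx hx (colc c y), htrans y hdcy hyu (colc c y)]
      exact hkey
  have hLIEC : IsLIEC T 2 cc := by
    constructor
    · intro e he
      induction e using Sym2.ind with
      | _ p q =>
        rw [hccval]
        have h1 := hFb p
        have h2 := hFb q
        split_ifs <;> omega
    · intro x y hadj
      rcases adj_cases hT hadj with hy | hx
      · exact hconf x y hy
      · have hthis := hconf y x hx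
        rw [Sym2.eq_swap] at hthis
        exact hthis.symm
  have h2mem : 2 ∈ {k | ∃ c, IsLIEC T k c} := ⟨cc, hLIEC⟩
  have hle : irrChromIndex T ≤ 2 := Nat.sInf_le h2mem
  omega
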